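/- arXiv:2308.14856 — 2 statements merged into one kernel-verified Lean document; each statement's English description precedes it below -/
import Mathlib

section
/- Let J : [0,R] → ℝ be a C² function satisfying J''(r) + K(r)·J(r) = 0 with J(0) = 0, J'(0) = 1, where K : [0,R] → ℝ is continuous with 0 ≤ K(r) ≤ K̃ for a constant K̃ > 0. Suppose additionally that J(r) ≤ M·r on [0,R] for some constant M > 1, and that R² · K̃ · M < 1. Then J'(r) > 0 for all r ∈ [0,R], and in particular J(r) > 0 for all r ∈ (0,R]. -/
/-!
Since `0 ≤ K ≤ K̃` and `J r ≤ M r`, the curvature term obeys `K J ≤ K̃ M r`, so `J'' ≥ -K̃ M r`.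
Integrating from `J'(0) = 1` gives `J'(r) ≥ 1 - K̃ M r² / 2 > 1/2` on `[0,R]` because
`R² K̃ M < 1`; then `J` is strictly increasing from `J(0) = 0`.
-/

open Set

theorem sub_half_mul_sq_le_of_neg_mul_le_deriv {f f' : ℝ → ℝ} {R c : ℝ}
    (hf : ∀ r ∈ Icc 0 R, HasDerivAt f (f' r) r) (hf' : ∀ r ∈ Ioo 0 R, -(c * r) ≤ f' r) :
    ∀ r ∈ Icc 0 R, f 0 - c / 2 * r ^ 2 ≤ f r := by
  set g : ℝ → ℝ := fun r => f r + c / 2 * r ^ 2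
  have hg : ∀ r ∈ Icc 0 R, HasDerivAt g (f' r + c * r) r := fun r hr =>
    ((hf r hr).add ((hasDerivAt_pow 2 r).const_mul (c / 2))).congr_deriv (by norm_num; ring)
  have hmono : MonotoneOn g (Icc 0 R) := by
    refine monotoneOn_of_hasDerivWithinAt_nonneg (convex_Icc 0 R)
      (fun r hr => (hg r hr).continuousAt.continuousWithinAt)
      (fun r hr => (hg r (interior_subset hr)).hasDerivWithinAt) fun r hr => ?_
    rw [interior_Icc] at hr
    linarith [hf' r hr]
  intro r hr
  have := hmono ⟨le_rfl, hr.1.trans hr.2⟩ hr hr.1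
  simp only [g] at this
  linarith

theorem jacobi_small_positive_curvature_general (R : ℝ)
    (J J' K : ℝ → ℝ) (Ktilde M : ℝ)
    (hM : 1 < M)
    (hKbound : ∀ r ∈ Icc 0 R, 0 ≤ K r ∧ K r ≤ Ktilde)
    (hJ : ∀ r ∈ Icc 0 R, HasDerivAt J (J' r) r)
    (hJ' : ∀ r ∈ Icc 0 R, HasDerivAt J' (-(K r * J r)) r)
    (hJ0 : J 0 = 0) (hJ'0 : J' 0 = 1)
    (hJle : ∀ r ∈ Icc 0 R, J r ≤ M * r)
    (hsmall : R ^ 2 * Ktilde * M < 1) :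
    (∀ r ∈ Icc 0 R, 0 < J' r) ∧ ∀ r ∈ Ioc 0 R, 0 < J r := by
  have hcurv : ∀ r ∈ Icc 0 R, K r * J r ≤ Ktilde * M * r := fun r hr => by
    rw [mul_assoc]
    exact mul_le_mul_of_nonneg (hKbound r hr).2 (hJle r hr) (hKbound r hr).1
      (mul_nonneg (by linarith) hr.1)
  have hJ'lower := sub_half_mul_sq_le_of_neg_mul_le_deriv (c := Ktilde * M) hJ' fun r hr => by
    linarith [hcurv r (Ioo_subset_Icc_self hr)]
  have hJ'pos : ∀ r ∈ Icc 0 R, 0 < J' r := fun r hr => by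
    have hKtM : 0 ≤ Ktilde * M := mul_nonneg ((hKbound r hr).1.trans (hKbound r hr).2) (by linarith)
    have hr2 : r ^ 2 ≤ R ^ 2 := pow_le_pow_left₀ hr.1 hr.2 2
    linarith [hJ'lower r hr, mul_le_mul_of_nonneg_left hr2 hKtM]
  refine ⟨hJ'pos, fun r hr => ?_⟩
  have hJmono : StrictMonoOn J (Icc 0 R) :=
    strictMonoOn_of_hasDerivWithinAt_pos (convex_Icc 0 R)
      (fun r hr => (hJ r hr).continuousAt.continuousWithinAt)
      (fun r hr => (hJ r (interior_subset hr)).hasDerivWithinAt)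
      fun r hr => hJ'pos r (interior_subset hr)
  simpa [hJ0] using hJmono ⟨le_rfl, hr.1.le.trans hr.2⟩ (Ioc_subset_Icc_self hr) hr.1

/-- Jacobi field in bounded positive curvature: if `J'' + K J = 0` with
`J 0 = 0`, `J' 0 = 1`, `0 ≤ K ≤ K̃`, `J r ≤ M r`, `M > 1` and `R² K̃ M < 1`,
then `J' > 0` on `[0,R]` and `J > 0` on `(0,R]`. -/
theorem jacobi_small_positive_curvature (R : ℝ) (hR : 0 < R)
    (J J' K : ℝ → ℝ) (Ktilde M : ℝ)
    (hKt : 0 < Ktilde) (hM : 1 < M)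
    (hK : ContinuousOn K (Icc 0 R))
    (hKbound : ∀ r ∈ Icc 0 R, 0 ≤ K r ∧ K r ≤ Ktilde)
    (hJ : ∀ r ∈ Icc 0 R, HasDerivAt J (J' r) r)
    (hJ' : ∀ r ∈ Icc 0 R, HasDerivAt J' (-(K r * J r)) r)
    (hJ0 : J 0 = 0) (hJ'0 : J' 0 = 1)
    (hJle : ∀ r ∈ Icc 0 R, J r ≤ M * r)
    (hsmall : R ^ 2 * Ktilde * M < 1) :
    (∀ r ∈ Icc 0 R, 0 < J' r) ∧ ∀ r ∈ Ioc 0 R, 0 < J r :=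
  jacobi_small_positive_curvature_general R J J' K Ktilde M hM hKbound hJ hJ' hJ0 hJ'0 hJle hsmall
end

section
/- Let α : [-L,L] → S² be a unit-speed C² spherical curve with geodesic curvature κ and λ ∈ (π/2,π), and let β(s) = α(s)cos λ + N_α(s)sin λ with N_α = α × α'. Assume 0 ≤ κ(s) < −tan λ for all s. Then the geodesic curvature of β (with respect to its arc-length parametrization and with normal N_β(s) = α(s)sin λ − N_α(s)cos λ) is κ_β(s) = −(sin λ + κ(s)cos λ)/(cos λ − κ(s)sin λ), and κ_β(s) > 0 for all s. -/
open Set Real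
open scoped RealInnerProductSpace

/-- The cross product on `ℝ³` viewed as `EuclideanSpace ℝ (Fin 3)`. -/
noncomputable def cross3 (x y : EuclideanSpace ℝ (Fin 3)) : EuclideanSpace ℝ (Fin 3) :=
  (WithLp.equiv 2 (Fin 3 → ℝ)).symm
    ![x 1 * y 2 - x 2 * y 1, x 2 * y 0 - x 0 * y 2, x 0 * y 1 - x 1 * y 0]

/-! For a unit-speed curve `α` on the unit sphere, `α`, `α'` and `N = α × α'` form an orthonormal
frame, and `⟪α', α''⟫ = 0` gives the Frenet equation `N' = α × α'' = -κ α'`. Hence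
`β' = (cos λ - κ sin λ) α'` and `N_β' = (sin λ + κ cos λ) α'`. Differentiating `⟪β', N_β⟫ = 0`
gives `⟪β'', N_β⟫ = -⟪β', N_β'⟫`, which yields the formula; its sign comes from
`cos λ < 0 < sin λ` and `κ cos λ > -tan λ cos λ = -sin λ`. -/

local notation "ℝ³" => EuclideanSpace ℝ (Fin 3)

@[simp]
lemma cross3_apply_zero (x y : ℝ³) : cross3 x y 0 = x 1 * y 2 - x 2 * y 1 := by simp [cross3]

@[simp]
lemma cross3_apply_one (x y : ℝ³) : cross3 x y 1 = x 2 * y 0 - x 0 * y 2 := by simp [cross3]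

@[simp]
lemma cross3_apply_two (x y : ℝ³) : cross3 x y 2 = x 0 * y 1 - x 1 * y 0 := by simp [cross3]

lemma EuclideanSpace.inner_fin_three (x y : ℝ³) :
    ⟪x, y⟫ = x 0 * y 0 + x 1 * y 1 + x 2 * y 2 := by
  simp only [PiLp.inner_apply, RCLike.inner_apply, ringHom_apply, Fin.sum_univ_three]
  ring

lemma cross3_self (x : ℝ³) : cross3 x x = 0 := by
  ext i; fin_cases i <;> simp <;> ring

lemma cross3_add_right (x y z : ℝ³) : cross3 x (y + z) = cross3 x y + cross3 x z := by
  ext i; fin_cases i <;> simp <;> ring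

lemma cross3_smul_right (c : ℝ) (x y : ℝ³) : cross3 x (c • y) = c • cross3 x y := by
  ext i; fin_cases i <;> simp <;> ring

lemma inner_cross3_right_self (x y : ℝ³) : ⟪cross3 x y, y⟫ = 0 := by
  simp only [EuclideanSpace.inner_fin_three, cross3_apply_zero, cross3_apply_one,
    cross3_apply_two]
  ring

lemma cross3_cross3 (x y z : ℝ³) : cross3 x (cross3 y z) = ⟪x, z⟫ • y - ⟪x, y⟫ • z := by
  ext i; fin_cases i <;> simp [EuclideanSpace.inner_fin_three] <;> ring

lemma inner_cross3_self (x y : ℝ³) :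
    ⟪cross3 x y, cross3 x y⟫ = ⟪x, x⟫ * ⟪y, y⟫ - ⟪x, y⟫ ^ 2 := by
  simp only [EuclideanSpace.inner_fin_three, cross3_apply_zero, cross3_apply_one,
    cross3_apply_two]
  ring

-- `N × (z × N)` with `N = x × y`, expanded by the BAC-CAB rule in two ways.
lemma inner_cross3_self_smul (x y z : ℝ³) :
    ⟪cross3 x y, cross3 x y⟫ • z = ⟪z, cross3 x y⟫ • cross3 x y
      + (⟪y, y⟫ * ⟪z, x⟫ - ⟪x, y⟫ * ⟪z, y⟫) • x + (⟪x, x⟫ * ⟪z, y⟫ - ⟪x, y⟫ * ⟪z, x⟫) • y := by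
  simp only [EuclideanSpace.inner_fin_three, cross3_apply_zero, cross3_apply_one,
    cross3_apply_two]
  ext i; fin_cases i <;> simp <;> ring

lemma eq_orthonormal_frame_expansion {x y : ℝ³} (hx : ⟪x, x⟫ = 1) (hy : ⟪y, y⟫ = 1)
    (hxy : ⟪x, y⟫ = 0) (z : ℝ³) :
    z = ⟪z, x⟫ • x + ⟪z, y⟫ • y + ⟪z, cross3 x y⟫ • cross3 x y := by
  have h := inner_cross3_self_smul x y z
  rw [inner_cross3_self, hx, hy, hxy] at h
  simp only [one_mul, zero_mul, sub_zero, ne_eq, OfNat.ofNat_ne_zero, not_false_eq_true,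
    zero_pow, one_smul] at h
  exact h.trans (by abel)

lemma cross3_eq_of_orthonormal {x y : ℝ³} (hx : ⟪x, x⟫ = 1) (hy : ⟪y, y⟫ = 1)
    (hxy : ⟪x, y⟫ = 0) (z : ℝ³) :
    cross3 x z = ⟪z, y⟫ • cross3 x y - ⟪z, cross3 x y⟫ • y := by
  conv_lhs => rw [eq_orthonormal_frame_expansion hx hy hxy z]
  simp only [cross3_add_right, cross3_smul_right, cross3_self, cross3_cross3, hx, hxy]
  module

lemma hasDerivAt_euclideanSpace_iff {ι : Type*} [Fintype ι] {f : ℝ → EuclideanSpace ℝ ι}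
    {f' : EuclideanSpace ℝ ι} {t : ℝ} :
    HasDerivAt f f' t ↔ ∀ i, HasDerivAt (fun r => f r i) (f' i) t := by
  let e := PiLp.continuousLinearEquiv 2 ℝ fun _ : ι => ℝ
  refine ⟨fun h => hasDerivAt_pi.1 (e.hasFDerivAt.comp_hasDerivAt t h), fun h => ?_⟩
  exact (e.symm.hasFDerivAt.comp_hasDerivAt t (hasDerivAt_pi.2 h) :)

theorem HasDerivAt.cross3 {f g : ℝ → ℝ³} {f' g' : ℝ³} {t : ℝ} (hf : HasDerivAt f f' t)
    (hg : HasDerivAt g g' t) :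
    HasDerivAt (fun r => cross3 (f r) (g r)) (cross3 f' (g t) + cross3 (f t) g') t := by
  have hf := hasDerivAt_euclideanSpace_iff.1 hf
  have hg := hasDerivAt_euclideanSpace_iff.1 hg
  refine hasDerivAt_euclideanSpace_iff.2 fun i => ?_
  fin_cases i <;> simp only [Fin.zero_eta, Fin.mk_one, Fin.reduceFinMk, PiLp.add_apply,
    cross3_apply_zero, cross3_apply_one, cross3_apply_two]
  · exact (((hf 1).mul (hg 2)).sub ((hf 2).mul (hg 1))).congr_deriv (by ring)
  · exact (((hf 2).mul (hg 0)).sub ((hf 0).mul (hg 2))).congr_deriv (by ring)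
  · exact (((hf 0).mul (hg 1)).sub ((hf 1).mul (hg 0))).congr_deriv (by ring)

theorem HasDerivAt.eq_zero_of_eqOn_const {F : Type*} [NormedAddCommGroup F] [NormedSpace ℝ F]
    {f : ℝ → F} {f' c : F} {S : Set ℝ} {t : ℝ} (hf : HasDerivAt f f' t)
    (hS : UniqueDiffWithinAt ℝ S t) (ht : t ∈ S) (hc : ∀ r ∈ S, f r = c) : f' = 0 :=
  hS.eq_deriv S hf.hasDerivWithinAt ((hasDerivWithinAt_const t S c).congr hc (hc t ht))

theorem HasDerivAt.inner_eq_zero_of_inner_self_const {E : Type*} [NormedAddCommGroup E]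
    [InnerProductSpace ℝ E] {f : ℝ → E} {f' : E} {c : ℝ} {S : Set ℝ} {t : ℝ}
    (hf : HasDerivAt f f' t) (hS : UniqueDiffWithinAt ℝ S t) (ht : t ∈ S)
    (hc : ∀ r ∈ S, ⟪f r, f r⟫ = c) : ⟪f t, f'⟫ = 0 := by
  have h := (hf.inner ℝ hf).eq_zero_of_eqOn_const hS ht hc
  rw [real_inner_comm (f t) f'] at h
  linarith

theorem hasDerivAt_cross3_of_sphere_unitSpeed {α α' : ℝ → ℝ³} {α'' : ℝ³} {S : Set ℝ} {t : ℝ}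
    (hα : HasDerivAt α (α' t) t) (hα' : HasDerivAt α' α'' t) (hS : UniqueDiffWithinAt ℝ S t)
    (ht : t ∈ S) (hsphere : ∀ r ∈ S, ⟪α r, α r⟫ = 1) (hunit : ∀ r ∈ S, ⟪α' r, α' r⟫ = 1) :
    HasDerivAt (fun r => cross3 (α r) (α' r)) (-⟪α'', cross3 (α t) (α' t)⟫ • α' t) t := by
  have hαα' := hα.inner_eq_zero_of_inner_self_const hS ht hsphere
  have hα'α'' := hα'.inner_eq_zero_of_inner_self_const hS ht hunit
  convert hα.cross3 hα' using 1
  rw [cross3_self, zero_add, cross3_eq_of_orthonormal (hsphere t ht) (hunit t ht) hαα' α'',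
    real_inner_comm (α' t) α'', hα'α'', zero_smul, zero_sub, neg_smul]

theorem HasDerivAt.smul_add_smul_of_hasDerivAt_neg_smul {E : Type*} [NormedAddCommGroup E]
    [NormedSpace ℝ E] {α N : ℝ → E} {T : E} {κ t : ℝ} (hα : HasDerivAt α T t)
    (hN : HasDerivAt N (-κ • T) t) (a b : ℝ) :
    HasDerivAt (fun r => a • α r + b • N r) ((a - κ * b) • T) t :=
  ((hα.const_smul a).add (hN.const_smul b)).congr_deriv (by module)

theorem inner_deriv_div_norm_sq_eq {E : Type*} [NormedAddCommGroup E] [InnerProductSpace ℝ E]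
    {β' ν : ℝ → E} {β'' T : E} {c k t : ℝ} {S : Set ℝ} (hβ' : HasDerivAt β' β'' t)
    (hν : HasDerivAt ν (k • T) t) (hS : UniqueDiffWithinAt ℝ S t) (ht : t ∈ S)
    (horth : ∀ r ∈ S, ⟪β' r, ν r⟫ = 0) (hβ't : β' t = c • T) (hT : ⟪T, T⟫ = 1) (hc : c ≠ 0) :
    ⟪β'', ν t⟫ / ‖β' t‖ ^ 2 = -k / c := by
  have hderiv := (hβ'.inner ℝ hν).eq_zero_of_eqOn_const hS ht horth
  rw [hβ't, real_inner_smul_left, real_inner_smul_right, hT] at hderiv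
  rw [hβ't, ← real_inner_self_eq_norm_sq, real_inner_smul_left, real_inner_smul_right, hT,
    show ⟪β'', ν t⟫ = -(c * k) by linarith]
  field_simp

lemma cos_sub_mul_sin_neg_and_sin_add_mul_cos_pos {lam k : ℝ} (hlam : lam ∈ Ioo (π / 2) π)
    (hk₀ : 0 ≤ k) (hk : k < -Real.tan lam) :
    Real.cos lam - k * Real.sin lam < 0 ∧ 0 < Real.sin lam + k * Real.cos lam := by
  have hsin : 0 < Real.sin lam := Real.sin_pos_of_pos_of_lt_pi (by linarith [hlam.1, pi_pos]) hlam.2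
  have hcos : Real.cos lam < 0 :=
    Real.cos_neg_of_pi_div_two_lt_of_lt hlam.1 (by linarith [hlam.2, pi_pos])
  have htan : Real.tan lam * Real.cos lam = Real.sin lam := Real.tan_mul_cos hcos.ne
  exact ⟨by nlinarith, by nlinarith⟩

/-- The geodesic curvature of the parallel curve `β = α cos λ + N_α sin λ`, computed as
`⟨β'', N_β⟩ / |β'|²` with `N_β = α sin λ − N_α cos λ`, equals
`−(sin λ + κ cos λ)/(cos λ − κ sin λ)`, which is positive when `0 ≤ κ < −tan λ`. -/
theorem parallel_curve_curvature (L lam : ℝ) (hL : 0 < L)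
    (hlam : lam ∈ Ioo (π / 2) π)
    (α α' α'' : ℝ → EuclideanSpace ℝ (Fin 3))
    (hα : ∀ s ∈ Icc (-L) L, HasDerivAt α (α' s) s)
    (hα' : ∀ s ∈ Icc (-L) L, HasDerivAt α' (α'' s) s)
    (hsphere : ∀ s ∈ Icc (-L) L, ⟪α s, α s⟫ = 1)
    (hunit : ∀ s ∈ Icc (-L) L, ⟪α' s, α' s⟫ = 1)
    (N : ℝ → EuclideanSpace ℝ (Fin 3)) (hN : ∀ s, N s = cross3 (α s) (α' s))
    (κ : ℝ → ℝ) (hκ : ∀ s, κ s = ⟪α'' s, N s⟫)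
    (hκrange : ∀ s ∈ Icc (-L) L, 0 ≤ κ s ∧ κ s < -Real.tan lam)
    (β β' β'' : ℝ → EuclideanSpace ℝ (Fin 3))
    (hβ : ∀ s, β s = Real.cos lam • α s + Real.sin lam • N s)
    (hβ' : ∀ s ∈ Icc (-L) L, HasDerivAt β (β' s) s)
    (hβ'' : ∀ s ∈ Icc (-L) L, HasDerivAt β' (β'' s) s)
    (Nβ : ℝ → EuclideanSpace ℝ (Fin 3))
    (hNβ : ∀ s, Nβ s = Real.sin lam • α s - Real.cos lam • N s) :
    ∀ s ∈ Icc (-L) L,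
      ⟪β'' s, Nβ s⟫ / ‖β' s‖ ^ 2
        = -(Real.sin lam + κ s * Real.cos lam) / (Real.cos lam - κ s * Real.sin lam) ∧
      0 < -(Real.sin lam + κ s * Real.cos lam) / (Real.cos lam - κ s * Real.sin lam) := by
  intro s hs
  obtain rfl : N = _ := funext hN
  obtain rfl : β = _ := funext hβ
  obtain rfl : Nβ = _ := funext hNβ
  have hI : UniqueDiffOn ℝ (Icc (-L) L) := uniqueDiffOn_Icc (by linarith)
  have hN' t (ht : t ∈ Icc (-L) L) :
      HasDerivAt (fun r => cross3 (α r) (α' r)) (-κ t • α' t) t := by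
    simpa only [hκ, real_inner_comm] using
      hasDerivAt_cross3_of_sphere_unitSpeed (hα t ht) (hα' t ht) (hI t ht) ht hsphere hunit
  have hβ'_eq t (ht : t ∈ Icc (-L) L) : β' t = (Real.cos lam - κ t * Real.sin lam) • α' t :=
    (hβ' t ht).unique ((hα t ht).smul_add_smul_of_hasDerivAt_neg_smul (hN' t ht) _ _)
  have hNβ' : HasDerivAt (fun r => Real.sin lam • α r - Real.cos lam • cross3 (α r) (α' r))
      ((Real.sin lam + κ s * Real.cos lam) • α' s) s := by
    simpa only [neg_smul, ← sub_eq_add_neg, mul_neg, sub_neg_eq_add] using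
      (hα s hs).smul_add_smul_of_hasDerivAt_neg_smul (hN' s hs) (Real.sin lam) (-Real.cos lam)
  have horth t (ht : t ∈ Icc (-L) L) :
      ⟪β' t, Real.sin lam • α t - Real.cos lam • cross3 (α t) (α' t)⟫ = 0 := by
    have hαα' := (hα t ht).inner_eq_zero_of_inner_self_const (hI t ht) ht hsphere
    rw [hβ'_eq t ht, real_inner_smul_left, inner_sub_right, real_inner_smul_right,
      real_inner_smul_right, real_inner_comm (α t), hαα', real_inner_comm (cross3 _ _),
      inner_cross3_right_self]
    ring
  obtain ⟨hc, hk⟩ :=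
    cos_sub_mul_sin_neg_and_sin_add_mul_cos_pos hlam (hκrange s hs).1 (hκrange s hs).2
  refine ⟨inner_deriv_div_norm_sq_eq (hβ'' s hs) hNβ' (hI s hs) hs horth (hβ'_eq s hs)
    (hunit s hs) hc.ne, div_pos_of_neg_of_neg (by linarith) hc⟩
end
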